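/- arXiv:2006.08250 — 3 statements merged into one kernel-verified Lean document; each statement's English description precedes it below -/
import Mathlib

section
/- Let r and s be coprime positive integers and let m, n be integers. Let s̄ denote an inverse of s modulo r and r̄ an inverse of r modulo s. Then the Kloosterman sum satisfies S(m, n; r·s) = S(m·s̄, n·s̄; r) · S(m·r̄, n·r̄; s). -/
/-!
The Chinese remainder theorem gives a ring isomorphism `ZMod (r * s) ≃ ZMod r × ZMod s`, hence a
bijection between the units mod `r * s` and pairs of units mod `r` and mod `s`. Since
`s * sbar + r * rbar ≡ 1 (mod r * s)`, partial fractions give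
`e(a / (r * s)) = e(sbar * a / r) * e(rbar * a / s)`, so the summand of `S(m, n; r * s)` at the
unit corresponding to `(u₁, u₂)` is the product of the summands of the two factors at `u₁` and `u₂`.
-/

open scoped Classical

/-- The Kloosterman sum `S(m, n; c) = Σ_{b mod c, (b,c)=1} e((m·b + n·b̄)/c)`,
written as a sum over pairs `(b, b')` of residues with `b·b' ≡ 1 (mod c)`. -/
noncomputable def kloostermanSum (m n : ℤ) (c : ℕ) : ℂ :=
  ∑ b ∈ Finset.range c, ∑ b' ∈ Finset.range c,
    if ((b : ℤ) * (b' : ℤ)) ≡ 1 [ZMOD (c : ℤ)] then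
      Complex.exp (2 * Real.pi * Complex.I * (((m * b + n * b' : ℤ) : ℂ) / (c : ℂ)))
    else 0

open Finset ZMod

noncomputable def kloosterman {R : Type*} [CommRing R] [Fintype Rˣ] (ψ : AddChar R ℂ)
    (m n : R) : ℂ :=
  ∑ u : Rˣ, ψ (m * u + n * ↑u⁻¹)

section Kloosterman

variable {R : Type*} [CommRing R] [Fintype Rˣ]

theorem kloosterman_mulShift (ψ : AddChar R ℂ) (a m n : R) :
    kloosterman (ψ.mulShift a) m n = kloosterman ψ (a * m) (a * n) := by
  simp only [kloosterman, AddChar.mulShift_apply, mul_add, mul_assoc]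

theorem kloosterman_eq_mul_of_ringEquiv {R₁ R₂ : Type*} [CommRing R₁] [CommRing R₂]
    [Fintype R₁ˣ] [Fintype R₂ˣ] (e : R ≃+* R₁ × R₂) (ψ : AddChar R ℂ) (ψ₁ : AddChar R₁ ℂ)
    (ψ₂ : AddChar R₂ ℂ) (hψ : ∀ x, ψ x = ψ₁ (e x).1 * ψ₂ (e x).2) (m n : R) :
    kloosterman ψ m n = kloosterman ψ₁ (e m).1 (e n).1 * kloosterman ψ₂ (e m).2 (e n).2 := by
  let eU : Rˣ ≃ R₁ˣ × R₂ˣ := ((Units.mapEquiv e.toMulEquiv).trans MulEquiv.prodUnits).toEquiv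
  have he : ∀ u : Rˣ, e u = (↑(eU u).1, ↑(eU u).2) := fun u => rfl
  have he_inv : ∀ u : Rˣ, e ↑u⁻¹ = (↑(eU u).1⁻¹, ↑(eU u).2⁻¹) := fun u => rfl
  rw [kloosterman, ← eU.symm.sum_comp, Fintype.sum_prod_type, kloosterman, kloosterman,
    Fintype.sum_mul_sum]
  refine Fintype.sum_congr _ _ fun u₁ => Fintype.sum_congr _ _ fun u₂ => ?_
  rw [hψ, map_add, map_mul, map_mul, he, he_inv, eU.apply_symm_apply]
  rfl

end Kloosterman

theorem sum_sum_ite_mul_eq_one {M β : Type*} [CommMonoid M] [Fintype M] [Fintype Mˣ]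
    [AddCommMonoid β] (f : M → M → β) :
    ∑ x : M, ∑ y : M, (if x * y = 1 then f x y else 0) = ∑ u : Mˣ, f u ↑u⁻¹ := by
  rw [← sum_product', ← sum_filter]
  exact sum_bij'
    (fun p hp => (⟨p.1, p.2, (mem_filter.mp hp).2, mul_comm p.2 p.1 ▸ (mem_filter.mp hp).2⟩ : Mˣ))
    (fun u _ => ((u : M), ((u⁻¹ : Mˣ) : M))) (fun _ _ => mem_univ _) (fun u _ => by simp)
    (fun _ _ => rfl) (fun _ _ => Units.ext rfl) (fun _ _ => rfl)

theorem sum_range_eq_sum_zmod {β : Type*} [AddCommMonoid β] (c : ℕ) [NeZero c] (f : ℕ → β) :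
    ∑ b ∈ range c, f b = ∑ x : ZMod c, f x.val :=
  sum_nbij' (↑) val (fun _ _ => mem_univ _) (fun x _ => mem_range.mpr x.val_lt)
    (fun _ hb => val_natCast_of_lt (mem_range.mp hb)) (fun x _ => natCast_zmod_val x)
    (fun _ hb => by rw [val_natCast_of_lt (mem_range.mp hb)])

theorem kloostermanSum_eq_kloosterman (m n : ℤ) (c : ℕ) [NeZero c] :
    kloostermanSum m n c = kloosterman stdAddChar (m : ZMod c) n := by
  rw [kloostermanSum, kloosterman,
    ← sum_sum_ite_mul_eq_one fun x y => stdAddChar ((m : ZMod c) * x + (n : ZMod c) * y),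
    sum_range_eq_sum_zmod c]
  refine Fintype.sum_congr _ _ fun x => ?_
  rw [sum_range_eq_sum_zmod c]
  refine Fintype.sum_congr _ _ fun y => ?_
  have hcond : ((x.val : ℤ) * (y.val : ℤ) ≡ 1 [ZMOD (c : ℤ)]) ↔ x * y = 1 := by
    rw [← intCast_eq_intCast_iff]; push_cast; simp
  simp only [hcond, ← mul_div_assoc, ← stdAddChar_coe]
  push_cast
  simp

theorem Int.mul_add_mul_modEq_one_of_modEq {r s : ℕ} (hrs : r.Coprime s) {sbar rbar : ℤ}
    (hsbar : (s : ℤ) * sbar ≡ 1 [ZMOD r]) (hrbar : (r : ℤ) * rbar ≡ 1 [ZMOD s]) :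
    (s : ℤ) * sbar + r * rbar ≡ 1 [ZMOD (r * s : ℕ)] := by
  push_cast
  refine (Int.modEq_and_modEq_iff_modEq_mul (by simpa using hrs)).mp ⟨?_, ?_⟩
  · simpa using hsbar.add (Int.modEq_zero_iff_dvd.mpr (dvd_mul_right (r : ℤ) rbar))
  · simpa using (Int.modEq_zero_iff_dvd.mpr (dvd_mul_right (s : ℤ) sbar)).add hrbar

theorem stdAddChar_intCast_eq_mul {r s : ℕ} [NeZero r] [NeZero s] {sbar rbar : ℤ}
    (h : (s : ℤ) * sbar + r * rbar ≡ 1 [ZMOD (r * s : ℕ)]) (a : ℤ) :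
    stdAddChar (a : ZMod (r * s)) =
      stdAddChar ((sbar * a : ℤ) : ZMod r) * stdAddChar ((rbar * a : ℤ) : ZMod s) := by
  have ha : (a : ZMod (r * s)) = (((s * sbar + r * rbar) * a : ℤ) : ZMod (r * s)) :=
    ((intCast_eq_intCast_iff _ _ _).mpr ((h.mul_right a).trans (by rw [one_mul])).symm)
  rw [ha, stdAddChar_coe, stdAddChar_coe, stdAddChar_coe, ← Complex.exp_add]
  have hr : (r : ℂ) ≠ 0 := NeZero.ne _
  have hs : (s : ℂ) ≠ 0 := NeZero.ne _
  congr 1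
  push_cast
  field_simp

theorem stdAddChar_eq_mul_chineseRemainder {r s : ℕ} [NeZero r] [NeZero s] (hrs : r.Coprime s)
    {sbar rbar : ℤ} (h : (s : ℤ) * sbar + r * rbar ≡ 1 [ZMOD (r * s : ℕ)]) (x : ZMod (r * s)) :
    stdAddChar x = stdAddChar.mulShift (sbar : ZMod r) (chineseRemainder hrs x).1 *
      stdAddChar.mulShift (rbar : ZMod s) (chineseRemainder hrs x).2 := by
  obtain ⟨a, rfl⟩ := intCast_surjective x
  simpa [map_intCast] using stdAddChar_intCast_eq_mul h a

/-- Twisted multiplicativity of Kloosterman sums. -/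
theorem kloosterman_twisted_multiplicativity (r s : ℕ) (hr : 0 < r) (hs : 0 < s)
    (hrs : Nat.Coprime r s) (m n : ℤ) (sbar rbar : ℤ)
    (hsbar : (s : ℤ) * sbar ≡ 1 [ZMOD (r : ℤ)])
    (hrbar : (r : ℤ) * rbar ≡ 1 [ZMOD (s : ℤ)]) :
    kloostermanSum m n (r * s) =
      kloostermanSum (m * sbar) (n * sbar) r * kloostermanSum (m * rbar) (n * rbar) s := by
  have : NeZero r := ⟨hr.ne'⟩
  have : NeZero s := ⟨hs.ne'⟩
  have hψ := stdAddChar_eq_mul_chineseRemainder hrs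
    (Int.mul_add_mul_modEq_one_of_modEq hrs hsbar hrbar)
  rw [kloostermanSum_eq_kloosterman, kloosterman_eq_mul_of_ringEquiv _ _ _ _ hψ,
    kloosterman_mulShift, kloosterman_mulShift, kloostermanSum_eq_kloosterman,
    kloostermanSum_eq_kloosterman]
  simp only [map_intCast, Prod.fst_intCast, Prod.snd_intCast, Int.cast_mul, mul_comm]
end

section
/- Let x ≥ 2^{100} be a real number. Suppose n₁ ≥ n₂ ≥ … ≥ n_k are integers with x^{1/5} < nᵢ < x^{2/5} for all i, and m₁ ≥ m₂ ≥ … ≥ m_l are integers with 1 ≤ mⱼ ≤ x^{1/5} for all j. Assume the total product N := n₁⋯n_k·m₁⋯m_l satisfies x < N ≤ 2x, and assume that no subproduct ∏_{i∈I} nᵢ · ∏_{j∈J} mⱼ (over any subsets I ⊆ {1,…,k}, J ⊆ {1,…,l}) lies in the interval [x^{2/5}, 2·x^{3/5}]. Then k = 3, and moreover n₁·m₁⋯m_l < x^{2/5} and m₁⋯m_l < x^{1/10}. -/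
set_option maxHeartbeats 1000000


open Finset

/-- Combinatorial structure of factorizations avoiding the Type II range
`[x^{2/5}, 2x^{3/5}]`: there must be exactly three large factors, and the
product of any large factor with all the small factors is below `x^{2/5}`,
with the product of the small factors below `x^{1/10}`. -/
theorem no_subproduct_structure (x : ℝ) (hx : (2 : ℝ) ^ 100 ≤ x)
    (k l : ℕ) (n : Fin k → ℕ) (m : Fin l → ℕ)
    (hn_mono : ∀ i j : Fin k, i ≤ j → n j ≤ n i)
    (hm_mono : ∀ i j : Fin l, i ≤ j → m j ≤ m i)
    (hn_lb : ∀ i, x ^ ((1 : ℝ) / 5) < (n i : ℝ))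
    (hn_ub : ∀ i, (n i : ℝ) < x ^ ((2 : ℝ) / 5))
    (hm_lb : ∀ j, 1 ≤ m j)
    (hm_ub : ∀ j, (m j : ℝ) ≤ x ^ ((1 : ℝ) / 5))
    (hN_lb : x < (((∏ i, n i) * ∏ j, m j : ℕ) : ℝ))
    (hN_ub : (((∏ i, n i) * ∏ j, m j : ℕ) : ℝ) ≤ 2 * x)
    (hsub : ∀ (I : Finset (Fin k)) (J : Finset (Fin l)),
      ¬ (x ^ ((2 : ℝ) / 5) ≤ (((∏ i ∈ I, n i) * ∏ j ∈ J, m j : ℕ) : ℝ) ∧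
          (((∏ i ∈ I, n i) * ∏ j ∈ J, m j : ℕ) : ℝ) ≤ 2 * x ^ ((3 : ℝ) / 5))) :
    k = 3 ∧ (∀ i : Fin k, (n i : ℝ) * ∏ j, (m j : ℝ) < x ^ ((2 : ℝ) / 5)) ∧
      (∏ j, (m j : ℝ)) < x ^ ((1 : ℝ) / 10) := by
  have hx1 : (1 : ℝ) < x := lt_of_lt_of_le (by norm_num) hx
  have hx0 : (0 : ℝ) < x := by linarith
  have hr25 : (0 : ℝ) < x ^ ((2 : ℝ) / 5) := Real.rpow_pos_of_pos hx0 _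
  have hr15 : (0 : ℝ) < x ^ ((1 : ℝ) / 5) := Real.rpow_pos_of_pos hx0 _
  have hr15_1 : (1 : ℝ) ≤ x ^ ((1 : ℝ) / 5) := by
    have := Real.rpow_le_rpow_of_exponent_le hx1.le (show (0:ℝ) ≤ 1/5 by norm_num)
    rwa [Real.rpow_zero] at this
  have hr25_1 : (1 : ℝ) < x ^ ((2 : ℝ) / 5) :=
    (Real.one_lt_rpow_iff_of_pos hx0).mpr (Or.inl ⟨hx1, by norm_num⟩)
  have h2515 : x ^ ((2:ℝ)/5) * x ^ ((1:ℝ)/5) = x ^ ((3:ℝ)/5) := by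
    rw [← Real.rpow_add hx0]; norm_num
  have h3525 : x ^ ((3:ℝ)/5) * x ^ ((2:ℝ)/5) = x := by
    rw [← Real.rpow_add hx0]; norm_num
  have h1515 : x ^ ((1:ℝ)/5) * x ^ ((1:ℝ)/5) = x ^ ((2:ℝ)/5) := by
    rw [← Real.rpow_add hx0]; norm_num
  have h25x : x ^ ((2:ℝ)/5) ≤ x := by
    have := Real.rpow_le_rpow_of_exponent_le hx1.le (show (2:ℝ)/5 ≤ 1 by norm_num)
    rwa [Real.rpow_one] at this
  -- key inductive claim
  have key : ∀ (I : Finset (Fin k)), ((∏ i ∈ I, n i : ℕ) : ℝ) < x ^ ((2 : ℝ) / 5) →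
      ∀ (J : Finset (Fin l)),
        (((∏ i ∈ I, n i) * ∏ j ∈ J, m j : ℕ) : ℝ) < x ^ ((2 : ℝ) / 5) := by
    intro I hI J
    induction J using Finset.induction_on with
    | empty => simpa using hI
    | @insert a J ha ih =>
      by_contra hcon
      push_neg at hcon
      refine hsub I (insert a J) ⟨hcon, ?_⟩
      rw [Finset.prod_insert ha]
      have hA0 : (0:ℝ) ≤ ((∏ i ∈ I, n i) * ∏ j ∈ J, m j : ℕ) := Nat.cast_nonneg _
      have hma : (m a : ℝ) ≤ x ^ ((1:ℝ)/5) := hm_ub a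
      have : (((∏ i ∈ I, n i) * (m a * ∏ j ∈ J, m j) : ℕ) : ℝ)
          = (((∏ i ∈ I, n i) * ∏ j ∈ J, m j : ℕ) : ℝ) * m a := by push_cast; ring
      rw [this]
      refine le_of_lt ?_
      calc (((∏ i ∈ I, n i) * ∏ j ∈ J, m j : ℕ) : ℝ) * m a
          ≤ (((∏ i ∈ I, n i) * ∏ j ∈ J, m j : ℕ) : ℝ) * x ^ ((1:ℝ)/5) :=
            mul_le_mul_of_nonneg_left hma hA0
        _ < x ^ ((2:ℝ)/5) * x ^ ((1:ℝ)/5) := mul_lt_mul_of_pos_right ih hr15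
        _ = x ^ ((3:ℝ)/5) := h2515
        _ ≤ 2 * x ^ ((3:ℝ)/5) := by nlinarith [Real.rpow_pos_of_pos hx0 ((3:ℝ)/5)]
  have hPm : ((∏ j, m j : ℕ) : ℝ) < x ^ ((2:ℝ)/5) := by
    have := key ∅ (by simpa using hr25_1) univ
    simpa using this
  have hni : ∀ i : Fin k, ((n i * ∏ j, m j : ℕ) : ℝ) < x ^ ((2:ℝ)/5) := fun i => by
    have := key {i} (by simpa using hn_ub i) univ
    simpa using this
  set P : ℝ := ∏ j, (m j : ℝ) with hPdef
  clear_value P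
  have hPcast : ((∏ j, m j : ℕ) : ℝ) = P := by rw [hPdef, Nat.cast_prod]
  have hP1 : (1:ℝ) ≤ P := by
    rw [hPdef, ← Nat.cast_prod]
    exact_mod_cast Finset.one_le_prod' fun j _ => hm_lb j
  have hniP : ∀ i : Fin k, (n i : ℝ) * P < x ^ ((2:ℝ)/5) := fun i => by
    rw [hPdef]; have := hni i; push_cast at this; exact this
  have hn1 : ∀ i : Fin k, (1:ℝ) ≤ (n i : ℝ) := fun i => (lt_of_le_of_lt hr15_1 (hn_lb i)).le
  have hNl : x < (∏ i, (n i : ℝ)) * P := by rw [hPdef]; push_cast at hN_lb; exact hN_lb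
  have hNu : (∏ i, (n i : ℝ)) * P ≤ 2 * x := by rw [hPdef]; push_cast at hN_ub; exact hN_ub
  have hn1' : ∀ i : Fin k, 1 ≤ n i := fun i => by exact_mod_cast hn1 i
  have hprodn1 : (1:ℝ) ≤ ∏ i, (n i : ℝ) := by
    rw [← Nat.cast_prod]
    exact_mod_cast Finset.one_le_prod' fun i _ => hn1' i
  -- k ≥ 3
  have hk3 : 3 ≤ k := by
    by_contra h
    push_neg at h
    rcases Nat.eq_zero_or_pos k with hk0 | hkpos
    · subst hk0
      have : (∏ i : Fin 0, (n i : ℝ)) = 1 := by simp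
      rw [this, one_mul] at hNl
      rw [hPcast] at hPm
      linarith
    · have hPk : P ≤ P ^ k := le_self_pow₀ hP1 hkpos.ne'
      have hstep : (∏ i, (n i : ℝ)) * P ≤ ∏ i, ((n i : ℝ) * P) := by
        rw [Finset.prod_mul_distrib, Finset.prod_const, Finset.card_univ, Fintype.card_fin]
        exact mul_le_mul_of_nonneg_left hPk (le_trans zero_le_one hprodn1)
      have hlt : (∏ i, ((n i : ℝ) * P)) < (x ^ ((2:ℝ)/5)) ^ k := by
        have := Finset.prod_lt_prod_of_nonempty
          (f := fun i : Fin k => (n i : ℝ) * P) (g := fun _ : Fin k => x ^ ((2:ℝ)/5))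
          (fun i _ => by show (0:ℝ) < (n i : ℝ) * P; nlinarith [hn1 i, hP1]) (fun i _ => hniP i)
          ⟨⟨0, hkpos⟩, Finset.mem_univ _⟩
        simpa [Finset.prod_const, Finset.card_univ] using this
      have hexp : (x ^ ((2:ℝ)/5)) ^ k ≤ x := by
        rw [← Real.rpow_natCast (x ^ ((2:ℝ)/5)) k, ← Real.rpow_mul hx0.le]
        have hkr : (k : ℝ) ≤ 2 := by exact_mod_cast Nat.lt_succ_iff.mp h
        have : (2:ℝ)/5 * k ≤ 1 := by nlinarith
        calc x ^ ((2:ℝ)/5 * k) ≤ x ^ (1:ℝ) :=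
              Real.rpow_le_rpow_of_exponent_le hx1.le this
          _ = x := Real.rpow_one x
      linarith
  -- k ≤ 3
  have hk4 : k ≤ 3 := by
    by_contra h
    push_neg at h
    set a : Fin k := ⟨0, by omega⟩ with hadef
    set b : Fin k := ⟨1, by omega⟩ with hbdef
    set c : Fin k := ⟨2, by omega⟩ with hcdef
    set d : Fin k := ⟨3, by omega⟩ with hddef
    have hab : a ≠ b := Fin.ne_of_val_ne (by norm_num)
    have hac : a ≠ c := Fin.ne_of_val_ne (by norm_num)
    have had : a ≠ d := Fin.ne_of_val_ne (by norm_num)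
    have hbc : b ≠ c := Fin.ne_of_val_ne (by norm_num)
    have hbd : b ≠ d := Fin.ne_of_val_ne (by norm_num)
    have hcd : c ≠ d := Fin.ne_of_val_ne (by norm_num)
    have hV : ((∏ i ∈ ({a, b} : Finset (Fin k)), n i) * ∏ j ∈ (∅ : Finset (Fin l)), m j : ℕ)
        = n a * n b := by
      rw [Finset.prod_insert (by simp [hab]), Finset.prod_singleton, Finset.prod_empty, mul_one]
    have h2 : x ^ ((2:ℝ)/5) < (n a : ℝ) * n b := by
      have := mul_lt_mul'' (hn_lb a) (hn_lb b) hr15.le hr15.le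
      rwa [h1515] at this
    have h3 : 2 * x ^ ((3:ℝ)/5) < (n a : ℝ) * n b := by
      by_contra hcon
      push_neg at hcon
      refine hsub {a, b} ∅ ?_
      rw [hV]; push_cast
      exact ⟨h2.le, hcon⟩
    have h4 : x ^ ((2:ℝ)/5) < (n c : ℝ) * n d := by
      have := mul_lt_mul'' (hn_lb c) (hn_lb d) hr15.le hr15.le
      rwa [h1515] at this
    have h5 : ∏ i ∈ ({a, b, c, d} : Finset (Fin k)), n i = n a * (n b * (n c * n d)) := by
      rw [Finset.prod_insert (by simp [hab, hac, had]),
        Finset.prod_insert (by simp [hbc, hbd]),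
        Finset.prod_insert (by simp [hcd]), Finset.prod_singleton]
    have hsubp : (∏ i ∈ ({a, b, c, d} : Finset (Fin k)), n i) ≤ ∏ i, n i :=
      Finset.prod_le_prod_of_subset_of_one_le' (Finset.subset_univ _)
        (fun i _ _ => by exact_mod_cast hn1 i)
    have hbig : 2 * x < ((∏ i, n i : ℕ) : ℝ) := by
      have h6 : 2 * x < (n a : ℝ) * n b * ((n c : ℝ) * n d) := by
        have := mul_lt_mul'' h3 h4 (by positivity) hr25.le
        calc 2 * x = 2 * x ^ ((3:ℝ)/5) * x ^ ((2:ℝ)/5) := by rw [mul_assoc, h3525]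
          _ < _ := this
      calc 2 * x < (n a : ℝ) * n b * ((n c : ℝ) * n d) := h6
        _ = ((n a * (n b * (n c * n d)) : ℕ) : ℝ) := by push_cast; ring
        _ = ((∏ i ∈ ({a, b, c, d} : Finset (Fin k)), n i : ℕ) : ℝ) := by rw [h5]
        _ ≤ ((∏ i, n i : ℕ) : ℝ) := by exact_mod_cast hsubp
    have : ((∏ i, n i : ℕ) : ℝ) ≤ (∏ i, (n i : ℝ)) * P := by
      push_cast
      exact le_mul_of_one_le_right (by positivity) hP1
    linarith
  have hk : k = 3 := le_antisymm hk4 hk3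
  subst hk
  refine ⟨rfl, hniP, ?_⟩
  have hprod3 : (∏ i : Fin 3, ((n i : ℝ) * P)) < x ^ ((6:ℝ)/5) := by
    have h1 : (∏ i : Fin 3, ((n i : ℝ) * P)) < ∏ _i : Fin 3, x ^ ((2:ℝ)/5) :=
      Finset.prod_lt_prod_of_nonempty (fun i _ => by show (0:ℝ) < (n i : ℝ) * P; nlinarith [hn1 i, hP1])
        (fun i _ => hniP i) ⟨0, Finset.mem_univ _⟩
    have h2 : (∏ _i : Fin 3, x ^ ((2:ℝ)/5)) = x ^ ((6:ℝ)/5) := by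
      rw [Finset.prod_const, Finset.card_univ, Fintype.card_fin,
        ← Real.rpow_natCast (x ^ ((2:ℝ)/5)) 3, ← Real.rpow_mul hx0.le]
      norm_num
    linarith
  have hdistrib : (∏ i : Fin 3, ((n i : ℝ) * P)) = (∏ i, (n i : ℝ)) * P ^ 3 := by
    rw [Finset.prod_mul_distrib, Finset.prod_const, Finset.card_univ, Fintype.card_fin]
  have hP0 : (0:ℝ) < P := lt_of_lt_of_le zero_lt_one hP1
  have hxP2 : x * P ^ 2 < x ^ ((6:ℝ)/5) := by
    have h7 : x * P ^ 2 < ((∏ i, (n i : ℝ)) * P) * P ^ 2 :=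
      mul_lt_mul_of_pos_right hNl (by positivity)
    have h8 : ((∏ i, (n i : ℝ)) * P) * P ^ 2 = (∏ i, (n i : ℝ)) * P ^ 3 := by ring
    rw [h8] at h7
    linarith [hprod3, hdistrib ▸ hprod3]
  have hP215 : P ^ 2 < x ^ ((1:ℝ)/5) := by
    have h9 : x * x ^ ((1:ℝ)/5) = x ^ ((6:ℝ)/5) := by
      nth_rewrite 1 [← Real.rpow_one x]
      rw [← Real.rpow_add hx0]; norm_num
    rw [← h9] at hxP2
    exact lt_of_mul_lt_mul_left hxP2 hx0.le
  have h10 : (x ^ ((1:ℝ)/10)) ^ 2 = x ^ ((1:ℝ)/5) := by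
    rw [← Real.rpow_natCast (x ^ ((1:ℝ)/10)) 2, ← Real.rpow_mul hx0.le]
    norm_num
  have : P ^ 2 < (x ^ ((1:ℝ)/10)) ^ 2 := by rw [h10]; exact hP215
  exact lt_of_pow_lt_pow_left₀ 2 (Real.rpow_nonneg hx0.le _) this
end

section
/- One has ∫_{4/21}^{2/7} ∫_{2/7 − u/2}^{min(u, 3/7 − u)} (1/(u·v²)) dv du + ∫_{2/7}^{3/7} ∫_{4/7 − u}^{min(u, (1−u)/2)} (1/(u·v²)) dv du = 19/6·log 2 − 1/4·log 3 − 13/12. -/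
/-!
The inner integral is `1/(u a) - 1/(u b)`. In both regions the lower limit `ℓ u` and the
second argument `m u` of the minimum are affine in `u`, and `min u (m u)` switches from `u`
to `m u` at the fixed point `r` of `m`. Splitting the outer range there, every piece is either
`∫ du / u²` or, by partial fractions `1/(u (c - d u)) = (1/u + d/(c - d u))/c`, a difference
of logarithms. For the data of the theorem the four logarithms are `log 2`, `log 2`, `log 3`
and `log (3/2)`.
-/

open MeasureTheory Real Set
open scoped Interval

theorem integral_one_div_sq {a b : ℝ} (h : (0 : ℝ) ∉ [[a, b]]) :
    ∫ v in a..b, 1 / v ^ 2 = 1 / a - 1 / b := by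
  simp_rw [one_div, ← zpow_natCast, ← zpow_neg]
  rw [integral_zpow (Or.inr ⟨by norm_num, h⟩)]
  norm_num
  ring

theorem integral_one_div_mul_affine {ℓ : ℝ → ℝ} {a b c d : ℝ} (hℓ : ∀ u, ℓ u = c - d * u)
    (hc : c ≠ 0) (h0 : (0 : ℝ) ∉ [[a, b]]) (hℓ0 : ∀ u ∈ [[a, b]], ℓ u ≠ 0) :
    ∫ u in a..b, 1 / (u * ℓ u) = log (b * ℓ a / (a * ℓ b)) / c := by
  obtain rfl : ℓ = fun u => c - d * u := funext hℓ
  beta_reduce at hℓ0 ⊢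
  have hu0 : ∀ u ∈ [[a, b]], u ≠ 0 := fun u hu hu0 => h0 (hu0 ▸ hu)
  have hderiv : ∀ u ∈ [[a, b]], HasDerivAt (fun u => (log u - log (c - d * u)) / c)
      (1 / (u * (c - d * u))) u := by
    intro u hu
    have hℓ' : HasDerivAt (fun u => c - d * u) (-d) u := by
      simpa using ((hasDerivAt_id u).const_mul d).const_sub c
    have hlog := (hasDerivAt_log (hu0 u hu)).sub (hℓ'.log (hℓ0 u hu))
    refine (hlog.div_const c).congr_deriv ?_
    have : u ≠ 0 := hu0 u hu
    have : c - u * d ≠ 0 := mul_comm d u ▸ hℓ0 u hu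
    field_simp
    ring
  have hint : IntervalIntegrable (fun u => 1 / (u * (c - d * u))) volume a b :=
    (continuousOn_const.div (by fun_prop)
      fun u hu => mul_ne_zero (hu0 u hu) (hℓ0 u hu)).intervalIntegrable
  rw [intervalIntegral.integral_eq_sub_of_hasDerivAt hderiv hint, log_div, log_mul, log_mul]
  · ring
  all_goals simp [hu0, hℓ0, left_mem_uIcc, right_mem_uIcc]

theorem sub_mul_pos_of_mem_Icc {a b c d u : ℝ} (ha : 0 < c - d * a) (hb : 0 < c - d * b)
    (hu : u ∈ Icc a b) : 0 < c - d * u := by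
  rcases le_total 0 d with hd | hd <;> nlinarith [hu.1, hu.2]

theorem min_self_eq_left_of_affine {m : ℝ → ℝ} {c d r u : ℝ} (hm : ∀ u, m u = c - d * u)
    (hd : -1 ≤ d) (hmr : m r = r) (hu : u ≤ r) : min u (m u) = u := by
  rw [hm] at hmr ⊢
  exact min_eq_left (by nlinarith)

theorem min_self_eq_right_of_affine {m : ℝ → ℝ} {c d r u : ℝ} (hm : ∀ u, m u = c - d * u)
    (hd : -1 ≤ d) (hmr : m r = r) (hu : r ≤ u) : min u (m u) = m u := by
  rw [hm] at hmr ⊢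
  exact min_eq_right (by nlinarith)

theorem min_self_pos_of_affine {m : ℝ → ℝ} {c d p q r u : ℝ} (hm : ∀ u, m u = c - d * u)
    (hd : -1 ≤ d) (hmr : m r = r) (hp : 0 < p) (hpr : p ≤ r) (hmq : 0 < m q)
    (hu : u ∈ Icc p q) : 0 < min u (m u) := by
  rcases le_total u r with hur | hur
  · rw [min_self_eq_left_of_affine hm hd hmr hur]
    linarith [hu.1]
  · rw [min_self_eq_right_of_affine hm hd hmr hur, hm]
    rw [hm] at hmr hmq
    exact sub_mul_pos_of_mem_Icc (by linarith) hmq ⟨hur, hu.2⟩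

theorem continuousOn_one_div_mul_min_self_of_affine {m : ℝ → ℝ} {c d p q r : ℝ}
    (hm : ∀ u, m u = c - d * u) (hd : -1 ≤ d) (hmr : m r = r) (hp : 0 < p) (hpr : p ≤ r)
    (hmq : 0 < m q) : ContinuousOn (fun u => 1 / (u * min u (m u))) (Icc p q) := by
  refine continuousOn_const.div ?_ fun u hu =>
    (mul_pos (by linarith [hu.1]) (min_self_pos_of_affine hm hd hmr hp hpr hmq hu)).ne'
  simp only [hm]
  fun_prop

theorem integral_one_div_mul_min_self_of_affine {m : ℝ → ℝ} {c d p q r : ℝ}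
    (hm : ∀ u, m u = c - d * u) (hc : c ≠ 0) (hd : -1 ≤ d) (hmr : m r = r) (hp : 0 < p)
    (hpr : p ≤ r) (hrq : r ≤ q) (hmq : 0 < m q) :
    ∫ u in p..q, 1 / (u * min u (m u)) = 1 / p - 1 / r + log (q * m r / (r * m q)) / c := by
  have hr : 0 < r := hp.trans_le hpr
  have hcont := continuousOn_one_div_mul_min_self_of_affine hm hd hmr hp hpr hmq
  have hm_pos : ∀ u ∈ [[r, q]], 0 < m u := fun u hu => by
    rw [uIcc_of_le hrq] at hu
    simpa [min_self_eq_right_of_affine hm hd hmr hu.1] using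
      min_self_pos_of_affine hm hd hmr hp hpr hmq ⟨hpr.trans hu.1, hu.2⟩
  rw [← intervalIntegral.integral_add_adjacent_intervals
      ((hcont.mono (Icc_subset_Icc_right hrq)).intervalIntegrable_of_Icc hpr)
      ((hcont.mono (Icc_subset_Icc_left hpr)).intervalIntegrable_of_Icc hrq),
    intervalIntegral.integral_congr (a := p) (b := r) (g := fun u => 1 / u ^ 2) fun u hu => by
      rw [uIcc_of_le hpr] at hu
      simp only [min_self_eq_left_of_affine hm hd hmr hu.2, sq],
    intervalIntegral.integral_congr (a := r) (b := q) (g := fun u => 1 / (u * m u)) fun u hu => by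
      rw [uIcc_of_le hrq] at hu
      simp only [min_self_eq_right_of_affine hm hd hmr hu.1],
    integral_one_div_sq (notMem_uIcc_of_lt hp hr),
    integral_one_div_mul_affine hm hc (notMem_uIcc_of_lt hr (hr.trans_le hrq))
      fun u hu => (hm_pos u hu).ne']

theorem integral_integral_one_div_mul_sq_min {ℓ m : ℝ → ℝ} {p r q c₁ d₁ c₂ d₂ : ℝ}
    (hℓ : ∀ u, ℓ u = c₁ - d₁ * u) (hm : ∀ u, m u = c₂ - d₂ * u) (hc₁ : c₁ ≠ 0) (hc₂ : c₂ ≠ 0)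
    (hd₂ : -1 ≤ d₂) (hp : 0 < p) (hpr : p ≤ r) (hrq : r ≤ q) (hmr : m r = r)
    (hℓp : 0 < ℓ p) (hℓq : 0 < ℓ q) (hmq : 0 < m q) :
    ∫ u in p..q, ∫ v in ℓ u..min u (m u), 1 / (u * v ^ 2) =
      log (q * ℓ p / (p * ℓ q)) / c₁ - (1 / p - 1 / r) - log (q * m r / (r * m q)) / c₂ := by
  have hpq := hpr.trans hrq
  have hℓ_pos : ∀ u ∈ [[p, q]], 0 < ℓ u := fun u hu => by
    rw [uIcc_of_le hpq] at hu
    simp only [hℓ] at hℓp hℓq ⊢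
    exact sub_mul_pos_of_mem_Icc hℓp hℓq hu
  have hmin_pos : ∀ u ∈ [[p, q]], 0 < min u (m u) := fun u hu =>
    min_self_pos_of_affine hm hd₂ hmr hp hpr hmq (uIcc_of_le hpq ▸ hu)
  have hcont_ℓ : ContinuousOn (fun u => 1 / (u * ℓ u)) [[p, q]] := by
    refine continuousOn_const.div ?_ fun u hu =>
      (mul_pos (by linarith [(uIcc_of_le hpq ▸ hu).1]) (hℓ_pos u hu)).ne'
    simp only [hℓ]
    fun_prop
  have hinner : EqOn (fun u => ∫ v in ℓ u..min u (m u), 1 / (u * v ^ 2))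
      (fun u => 1 / (u * ℓ u) - 1 / (u * min u (m u))) [[p, q]] := fun u hu => by
    simp_rw [← one_div_mul_one_div]
    rw [intervalIntegral.integral_const_mul,
      integral_one_div_sq (notMem_uIcc_of_lt (hℓ_pos u hu) (hmin_pos u hu))]
    ring
  have hcont_min := continuousOn_one_div_mul_min_self_of_affine hm hd₂ hmr hp hpr hmq
  rw [intervalIntegral.integral_congr hinner, intervalIntegral.integral_sub
      hcont_ℓ.intervalIntegrable (hcont_min.intervalIntegrable_of_Icc hpq),
    integral_one_div_mul_affine hℓ hc₁ (notMem_uIcc_of_lt hp (hp.trans_le hpq))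
      fun u hu => (hℓ_pos u hu).ne',
    integral_one_div_mul_min_self_of_affine hm hc₂ hd₂ hmr hp hpr hrq hmq]
  ring

/-- Evaluation of the double integrals arising in the sieve lower bound. -/
theorem sieve_integral_evaluation :
    (∫ u in (4 / 21 : ℝ)..(2 / 7), ∫ v in (2 / 7 - u / 2)..(min u (3 / 7 - u)),
        1 / (u * v ^ 2)) +
      (∫ u in (2 / 7 : ℝ)..(3 / 7), ∫ v in (4 / 7 - u)..(min u ((1 - u) / 2)),
        1 / (u * v ^ 2))
      = 19 / 6 * Real.log 2 - 1 / 4 * Real.log 3 - 13 / 12 := by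
  rw [integral_integral_one_div_mul_sq_min
      (ℓ := fun u => 2 / 7 - u / 2) (m := fun u => 3 / 7 - u)
      (c₁ := 2 / 7) (d₁ := 1 / 2) (c₂ := 3 / 7) (d₂ := 1) (r := 3 / 14)
      (fun _ => by ring) (fun _ => by ring),
    integral_integral_one_div_mul_sq_min
      (ℓ := fun u => 4 / 7 - u) (m := fun u => (1 - u) / 2)
      (c₁ := 4 / 7) (d₁ := 1) (c₂ := 1 / 2) (d₂ := 1 / 2) (r := 1 / 3)
      (fun _ => by ring) (fun _ => by ring)]
  all_goals norm_num
  rw [log_div (by norm_num) (by norm_num)]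
  ring
end
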